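/- arXiv:2203.12895 — 2 statements merged into one kernel-verified Lean document; each statement's English description precedes it below -/
import Mathlib

section
/- Let α be a positive integer, 0 < p = 1 - q < 1, z ≥ 0, and let g_z be the solution of the binomial Stein equation (g_z(0) = 0, g_z(k) = -∑_{j=k}^{α} [(α-k)!/(α-j)!]·[(k-1)!/j!]·(p/q)^{j-k}·[(j-z)^+ - E(B_{α,p}-z)^+] for 1 ≤ k ≤ α). Then |g_z(k)| ≤ 2q^{k-α} for all 0 ≤ k ≤ α. -/
/-!
For `1 ≤ k ≤ α` the solution splits as `g_z(k) = h₂(k) - h₁(k)` with `h₁, h₂ ≥ 0`, so it suffices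
to bound each `hᵢ(k)` by `q^{k-α}`. Write `c(k,j) = [(α-k)!/(α-j)!]·[(k-1)!/j!]` (`steinCoeff`)
and `x = p/q`.
Since `(j-z)^+ ≤ j` and `E(B_{α,p}-z)^+ ≤ E B_{α,p} = αp`, it is enough to have
`c(k,j)·j ≤ C(α-k, j-k)` and `c(k,j)·α ≤ C(α-k+1, j-k+1)`: the binomial theorem with
`1 + x = 1/q` then gives `h₁(k) ≤ q^{k-α}` and `h₂(k) ≤ q·(q^{k-α-1} - 1) ≤ q^{k-α}`.
-/

open Finset

/-- `E[(B_{α,p} - z)^+]`, the expected call function of a binomial random variable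
`B_{α,p}` with `P(B = j) = C(α,j) p^j (1-p)^{α-j}` for `j = 0,…,α`. -/
noncomputable def binomCallExp (α : ℕ) (p z : ℝ) : ℝ :=
  ∑ j ∈ Finset.range (α + 1),
    (α.choose j : ℝ) * p ^ j * (1 - p) ^ (α - j) * max ((j : ℝ) - z) 0

/-- `h₁(k) = ∑_{j=k}^{α} [(α-k)!/(α-j)!]·[(k-1)!/j!]·(p/q)^{j-k}·(j-z)^+` with `q = 1 - p`. -/
noncomputable def h1 (α : ℕ) (p z : ℝ) (k : ℕ) : ℝ :=
  ∑ j ∈ Finset.Icc k α,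
    ((α - k).factorial : ℝ) / ((α - j).factorial : ℝ) *
      (((k - 1).factorial : ℝ) / (j.factorial : ℝ)) *
        (p / (1 - p)) ^ (j - k) * max ((j : ℝ) - z) 0

/-- `h₂(k) = ∑_{j=k}^{α} [(α-k)!/(α-j)!]·[(k-1)!/j!]·(p/q)^{j-k}·E[(B_{α,p}-z)^+]`
with `q = 1 - p`. -/
noncomputable def h2 (α : ℕ) (p z : ℝ) (k : ℕ) : ℝ :=
  ∑ j ∈ Finset.Icc k α,
    ((α - k).factorial : ℝ) / ((α - j).factorial : ℝ) *
      (((k - 1).factorial : ℝ) / (j.factorial : ℝ)) *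
        (p / (1 - p)) ^ (j - k) * binomCallExp α p z

/-- The solution `g_z` of the binomial Stein equation: `g_z(0) = 0`,
`g_z(k) = -∑_{j=k}^{α} [(α-k)!/(α-j)!]·[(k-1)!/j!]·(p/q)^{j-k}·[(j-z)^+ - E(B_{α,p}-z)^+]`
for `1 ≤ k ≤ α`, extended by `g_z(k) = 0` for `k > α` (in particular `g_z(α+1) = 0`). -/
noncomputable def steinSol (α : ℕ) (p z : ℝ) (k : ℕ) : ℝ :=
  if k = 0 ∨ α < k then 0
  else
    -∑ j ∈ Finset.Icc k α,
      ((α - k).factorial : ℝ) / ((α - j).factorial : ℝ) *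
        (((k - 1).factorial : ℝ) / (j.factorial : ℝ)) *
          (p / (1 - p)) ^ (j - k) * (max ((j : ℝ) - z) 0 - binomCallExp α p z)

open scoped Nat

lemma Nat.factorial_mul_factorial_le_factorial_add (i j : ℕ) : i ! * j ! ≤ (i + j)! :=
  Nat.le_of_dvd (Nat.factorial_pos _) (Nat.factorial_mul_factorial_dvd_factorial_add i j)

lemma add_mul_factorial_mul_factorial_le (a i r : ℕ) :
    (a + 1 + i + r) * (a ! * (i + 1)!) ≤ (i + r + 1) * (a + 1 + i)! := by
  have hfac : (a + 1 + i)! = (i + 1 + a).choose a * (a ! * (i + 1)!) := by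
    rw [show a + 1 + i = i + 1 + a by omega, ← Nat.add_choose_mul_factorial_mul_factorial]
    ring
  have hchoose : a + 1 ≤ (i + 1 + a).choose a :=
    Nat.choose_succ_self_right a ▸ Nat.choose_le_choose a (by omega)
  rw [hfac, ← mul_assoc (i + r + 1)]
  refine Nat.mul_le_mul_right _ ?_
  calc a + 1 + i + r ≤ (i + r + 1) * (a + 1) := by nlinarith
    _ ≤ (i + r + 1) * (i + 1 + a).choose a := Nat.mul_le_mul_left _ hchoose

lemma sum_Icc_comp_sub {M : Type*} [AddCommMonoid M] (f : ℕ → M) (k n : ℕ) :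
    ∑ j ∈ Icc k n, f (j - k) = ∑ i ∈ range (n + 1 - k), f i := by
  rw [← Ico_add_one_right_eq_Icc, sum_Ico_eq_sum_range]
  simp only [Nat.add_sub_cancel_left]

lemma sum_range_choose_mul_pow {R : Type*} [CommSemiring R] (m : ℕ) (x : R) :
    ∑ i ∈ range (m + 1), (m.choose i : R) * x ^ i = (1 + x) ^ m := by
  rw [add_comm 1 x, add_pow]
  exact sum_congr rfl fun i _ => by rw [one_pow, mul_one, mul_comm]

lemma sum_range_choose_succ_mul_pow_succ {R : Type*} [CommRing R] (m : ℕ) (x : R) :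
    ∑ i ∈ range (m + 1), ((m + 1).choose (i + 1) : R) * x ^ (i + 1) = (1 + x) ^ (m + 1) - 1 := by
  rw [← sum_range_choose_mul_pow, sum_range_succ' _ (m + 1)]
  simp

lemma sum_range_choose_mul_pow_mul_pow_mul {R : Type*} [CommRing R] (n : ℕ) (x y : R) :
    ∑ j ∈ range (n + 1), (n.choose j : R) * x ^ j * y ^ (n - j) * j
      = n * x * (x + y) ^ (n - 1) := by
  rcases n with _ | m
  · simp
  rw [sum_range_succ', add_pow, mul_sum]
  simp only [Nat.cast_zero, mul_zero, add_zero, Nat.add_sub_add_right, Nat.add_sub_cancel]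
  refine sum_congr rfl fun j _ => ?_
  have h : ((m + 1).choose (j + 1) : R) * (j + 1 : ℕ) = (m + 1 : ℕ) * m.choose j := by
    rw [← Nat.cast_mul, ← Nat.cast_mul, Nat.add_one_mul_choose_eq]
  linear_combination x ^ (j + 1) * y ^ (m - j) * h

lemma one_add_div_one_sub {K : Type*} [Field K] {p : K} (hp : 1 - p ≠ 0) :
    1 + p / (1 - p) = (1 - p)⁻¹ := by
  field_simp
  ring

section BinomCallExp

variable {p z : ℝ}

lemma binomCallExp_nonneg (α : ℕ) (hp : 0 ≤ p) (hp1 : p ≤ 1) : 0 ≤ binomCallExp α p z :=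
  sum_nonneg fun j _ => by
    have : 0 ≤ 1 - p := by linarith
    positivity

lemma binomCallExp_le_mul (α : ℕ) (hp : 0 ≤ p) (hp1 : p ≤ 1) (hz : 0 ≤ z) :
    binomCallExp α p z ≤ α * p := by
  have : 0 ≤ 1 - p := by linarith
  calc binomCallExp α p z
      ≤ ∑ j ∈ range (α + 1), (α.choose j : ℝ) * p ^ j * (1 - p) ^ (α - j) * j :=
        sum_le_sum fun j _ => by gcongr; exact max_le (by linarith) j.cast_nonneg
    _ = α * p := by rw [sum_range_choose_mul_pow_mul_pow_mul, add_sub_cancel, one_pow, mul_one]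

end BinomCallExp

noncomputable def steinCoeff (α k j : ℕ) : ℝ :=
  ((α - k)! : ℝ) / (α - j)! * ((k - 1)! / j !)

lemma steinCoeff_nonneg (α k j : ℕ) : 0 ≤ steinCoeff α k j := by
  unfold steinCoeff
  positivity

lemma steinCoeff_add (a i r : ℕ) :
    steinCoeff (a + 1 + i + r) (a + 1) (a + 1 + i) = (i + r)! / r ! * (a ! / (a + 1 + i)!) := by
  rw [steinCoeff, show a + 1 + i + r - (a + 1) = i + r by omega,
    show a + 1 + i + r - (a + 1 + i) = r by omega, Nat.add_sub_cancel]

section SteinCoeff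

variable {α k j : ℕ}

lemma steinCoeff_mul_le_choose (hk : 1 ≤ k) (hkj : k ≤ j) (hjα : j ≤ α) :
    steinCoeff α k j * j ≤ (α - k).choose (j - k) := by
  obtain ⟨a, rfl⟩ : ∃ a, k = a + 1 := ⟨k - 1, by omega⟩
  obtain ⟨i, rfl⟩ : ∃ i, j = a + 1 + i := ⟨j - (a + 1), by omega⟩
  obtain ⟨r, rfl⟩ : ∃ r, α = a + 1 + i + r := ⟨α - (a + 1 + i), by omega⟩
  have hfac : ((a ! * i ! : ℕ) : ℝ) ≤ (a + i)! := by
    exact_mod_cast Nat.factorial_mul_factorial_le_factorial_add a i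
  rw [steinCoeff_add, show a + 1 + i + r - (a + 1) = i + r by omega,
    show a + 1 + i - (a + 1) = i by omega, Nat.cast_add_choose,
    show a + 1 + i = a + i + 1 by omega, Nat.factorial_succ]
  push_cast at hfac ⊢
  rw [div_mul_div_comm, div_mul_eq_mul_div, div_le_div_iff₀ (by positivity) (by positivity)]
  have := mul_le_mul_of_nonneg_left hfac (by positivity : (0:ℝ) ≤ (i + r)! * r ! * (a + i + 1))
  nlinarith

lemma steinCoeff_mul_le_choose_succ (hk : 1 ≤ k) (hkj : k ≤ j) (hjα : j ≤ α) :
    steinCoeff α k j * α ≤ (α - k + 1).choose (j - k + 1) := by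
  obtain ⟨a, rfl⟩ : ∃ a, k = a + 1 := ⟨k - 1, by omega⟩
  obtain ⟨i, rfl⟩ : ∃ i, j = a + 1 + i := ⟨j - (a + 1), by omega⟩
  obtain ⟨r, rfl⟩ : ∃ r, α = a + 1 + i + r := ⟨α - (a + 1 + i), by omega⟩
  have hfac : (((a + 1 + i + r) * (a ! * (i + 1)!) : ℕ) : ℝ) ≤ (i + r + 1) * (a + 1 + i)! := by
    exact_mod_cast add_mul_factorial_mul_factorial_le a i r
  rw [steinCoeff_add, show a + 1 + i + r - (a + 1) + 1 = i + 1 + r by omega,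
    show a + 1 + i - (a + 1) + 1 = i + 1 by omega, Nat.cast_add_choose,
    show i + 1 + r = i + r + 1 by omega, Nat.factorial_succ (i + r)]
  push_cast at hfac ⊢
  rw [div_mul_div_comm, div_mul_eq_mul_div, div_le_div_iff₀ (by positivity) (by positivity)]
  have := mul_le_mul_of_nonneg_left hfac (by positivity : (0:ℝ) ≤ (i + r)! * r !)
  nlinarith

end SteinCoeff

section SteinSolution

variable {α k : ℕ} {p z : ℝ}

lemma h1_nonneg (hp : 0 ≤ p) (hp1 : p < 1) : 0 ≤ h1 α p z k :=
  sum_nonneg fun j _ => by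
    have : 0 ≤ 1 - p := by linarith
    have : 0 ≤ max ((j : ℝ) - z) 0 := le_max_right _ _
    positivity

lemma h2_nonneg (hp : 0 ≤ p) (hp1 : p < 1) : 0 ≤ h2 α p z k :=
  sum_nonneg fun j _ => by
    have : 0 ≤ 1 - p := by linarith
    have := binomCallExp_nonneg α (z := z) hp hp1.le
    positivity

lemma h1_le (hk : 1 ≤ k) (hkα : k ≤ α) (hp : 0 ≤ p) (hp1 : p < 1) (hz : 0 ≤ z) :
    h1 α p z k ≤ (1 - p)⁻¹ ^ (α - k) := by
  have : 0 ≤ 1 - p := by linarith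
  calc h1 α p z k
      ≤ ∑ j ∈ Icc k α, ((α - k).choose (j - k) : ℝ) * (p / (1 - p)) ^ (j - k) := by
        refine sum_le_sum fun j hj => ?_
        obtain ⟨hkj, hjα⟩ := mem_Icc.mp hj
        have := steinCoeff_nonneg α k j
        calc steinCoeff α k j * (p / (1 - p)) ^ (j - k) * max ((j : ℝ) - z) 0
            ≤ steinCoeff α k j * (p / (1 - p)) ^ (j - k) * j := by
              gcongr
              exact max_le (by linarith) j.cast_nonneg
          _ = steinCoeff α k j * j * (p / (1 - p)) ^ (j - k) := by ring
          _ ≤ _ := by gcongr; exact steinCoeff_mul_le_choose hk hkj hjα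
    _ = (1 - p)⁻¹ ^ (α - k) := by
        rw [sum_Icc_comp_sub (fun i => ((α - k).choose i : ℝ) * (p / (1 - p)) ^ i),
          show α + 1 - k = α - k + 1 by omega, sum_range_choose_mul_pow,
          one_add_div_one_sub (by linarith)]

lemma h2_le (hk : 1 ≤ k) (hkα : k ≤ α) (hp : 0 ≤ p) (hp1 : p < 1) (hz : 0 ≤ z) :
    h2 α p z k ≤ (1 - p)⁻¹ ^ (α - k) := by
  have hq : 0 < 1 - p := by linarith
  set x := p / (1 - p)
  calc h2 α p z k
      ≤ ∑ j ∈ Icc k α, ((α - k + 1).choose (j - k + 1) : ℝ) * x ^ (j - k + 1) * (1 - p) := by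
        refine sum_le_sum fun j hj => ?_
        obtain ⟨hkj, hjα⟩ := mem_Icc.mp hj
        have := steinCoeff_nonneg α k j
        calc steinCoeff α k j * x ^ (j - k) * binomCallExp α p z
            ≤ steinCoeff α k j * x ^ (j - k) * (α * p) := by
              gcongr
              exact binomCallExp_le_mul α hp hp1.le hz
          _ = steinCoeff α k j * α * x ^ (j - k + 1) * (1 - p) := by
              simp only [x, pow_succ]
              field_simp
          _ ≤ _ := by gcongr; exact steinCoeff_mul_le_choose_succ hk hkj hjα
    _ = ((1 + x) ^ (α - k + 1) - 1) * (1 - p) := by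
        rw [← sum_mul, sum_Icc_comp_sub (fun i => ((α - k + 1).choose (i + 1) : ℝ) * x ^ (i + 1)),
          show α + 1 - k = α - k + 1 by omega, sum_range_choose_succ_mul_pow_succ]
    _ ≤ (1 + x) ^ (α - k + 1) * (1 - p) := by gcongr; linarith
    _ = (1 - p)⁻¹ ^ (α - k) := by
        rw [one_add_div_one_sub hq.ne', pow_succ, mul_assoc, inv_mul_cancel₀ hq.ne', mul_one]

lemma steinSol_eq_h2_sub_h1 (hk : 1 ≤ k) (hkα : k ≤ α) :
    steinSol α p z k = h2 α p z k - h1 α p z k := by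
  rw [steinSol, if_neg (by omega), h1, h2, ← sum_sub_distrib, ← sum_neg_distrib]
  exact sum_congr rfl fun j _ => by ring

end SteinSolution

theorem steinSol_bound_general (α : ℕ) (p q : ℝ)
    (hq : q = 1 - p) (hp : 0 < p) (hp1 : p < 1) (z : ℝ) (hz : 0 ≤ z) :
    ∀ k ≤ α, |steinSol α p z k| ≤ 2 * q ^ ((k : ℤ) - (α : ℤ)) := by
  intro k hkα
  have hq0 : 0 < q := by linarith
  have hpow : q ^ ((k : ℤ) - (α : ℤ)) = q⁻¹ ^ (α - k) := by
    rw [inv_pow, ← zpow_natCast, ← zpow_neg, Nat.cast_sub hkα, neg_sub]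
  rw [hpow]
  rcases Nat.eq_zero_or_pos k with rfl | hk
  · simp only [steinSol, true_or, if_true, abs_zero]
    positivity
  subst hq
  rw [steinSol_eq_h2_sub_h1 hk hkα]
  calc |h2 α p z k - h1 α p z k|
      ≤ (1 - p)⁻¹ ^ (α - k) :=
        abs_sub_le_of_nonneg_of_le (h2_nonneg hp.le hp1) (h2_le hk hkα hp.le hp1 hz)
          (h1_nonneg hp.le hp1) (h1_le hk hkα hp.le hp1 hz)
    _ ≤ 2 * (1 - p)⁻¹ ^ (α - k) := le_mul_of_one_le_left (by positivity) one_le_two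

/-- For `z ≥ 0` and the Stein solution `g_z`, `|g_z(k)| ≤ 2q^{k-α}` for all `0 ≤ k ≤ α`. -/
theorem steinSol_bound (α : ℕ) (hα : 0 < α) (p q : ℝ)
    (hq : q = 1 - p) (hp : 0 < p) (hp1 : p < 1) (z : ℝ) (hz : 0 ≤ z) :
    ∀ k ≤ α, |steinSol α p z k| ≤ 2 * q ^ ((k : ℤ) - (α : ℤ)) :=
  steinSol_bound_general α p q hq hp hp1 z hz
end

section
/- Let α be a positive integer, 0 < p = 1 - q < 1, z > 1, and let 1 ≤ k ≤ α with k ≥ z. Then h₂(k) = ∑_{j=k}^{α} [(α-k)!/(α-j)!]·[(k-1)!/j!]·(p/q)^{j-k}·E[(B_{α,p}-z)^+] satisfies h₂(k) ≤ 1 + (q^{k-α} - 1)/(qz). -/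
open Finset

open Nat

/-! Write `w i = P(B = i)` and `q = 1 - p`. The coefficients of `h₂(k)` are `w j / (k w k)`, so
`h₂(k) = E[(B - z)^+] P(B ≥ k) / (k w k)`. As `(· - z)^+` is at most `k - z` below `k` and at least
`k - z` from `k` on, `E[(B - z)^+] P(B ≥ k) ≤ E[(B - z)^+; B ≥ k]`. In this sum the term `i = k` is
at most `k w k`, and for `i = k + j`, `j ≥ 1`, we have
`w (k + j) = w k C(α - k, j) (p/q)^j / C(k + j, k)` with `(k + j - z) / C(k + j, k) ≤ k / (q z)`;
the binomial theorem then sums these terms to at most `k w k (q^(k - α) - 1) / (q z)`. -/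

noncomputable def binomWeight (α : ℕ) (p : ℝ) (i : ℕ) : ℝ :=
  α.choose i * p ^ i * (1 - p) ^ (α - i)

lemma sum_mul_mul_sum_le_of_separated {ι : Type*} [DecidableEq ι] {s t : Finset ι} (hts : t ⊆ s)
    {w g : ι → ℝ} {c : ℝ} (hw : ∀ i ∈ s, 0 ≤ w i) (hw1 : ∑ i ∈ s, w i = 1)
    (hlow : ∀ i ∈ s \ t, g i ≤ c) (hhigh : ∀ i ∈ t, c ≤ g i) :
    (∑ i ∈ s, w i * g i) * ∑ i ∈ t, w i ≤ ∑ i ∈ t, w i * g i := by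
  have hmass : ∑ i ∈ s \ t, w i + ∑ i ∈ t, w i = 1 := (sum_sdiff hts).trans hw1
  rw [← sum_sdiff hts]
  set Q := ∑ i ∈ s \ t, w i
  set P := ∑ i ∈ t, w i
  set A := ∑ i ∈ s \ t, w i * g i
  set C := ∑ i ∈ t, w i * g i
  have hQ : 0 ≤ Q := sum_nonneg fun i hi ↦ hw i (sdiff_subset hi)
  have hP : 0 ≤ P := sum_nonneg fun i hi ↦ hw i (hts hi)
  have hA : A ≤ Q * c := sum_mul (s \ t) w c ▸ sum_le_sum fun i hi ↦
    mul_le_mul_of_nonneg_left (hlow i hi) (hw i (sdiff_subset hi))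
  have hC : P * c ≤ C := sum_mul t w c ▸ sum_le_sum fun i hi ↦
    mul_le_mul_of_nonneg_left (hhigh i hi) (hw i (hts hi))
  calc (A + C) * P ≤ Q * c * P + C * P := by nlinarith [mul_le_mul_of_nonneg_right hA hP]
    _ ≤ Q * C + C * P := by nlinarith [mul_le_mul_of_nonneg_left hC hQ]
    _ = C := by linear_combination C * hmass

lemma add_le_choose_add {k j : ℕ} (hk : 1 ≤ k) (hj : 1 ≤ j) : k + j ≤ (k + j).choose k := by
  obtain ⟨r, rfl⟩ : ∃ r, k = r + 1 := ⟨k - 1, by omega⟩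
  have hpascal := Nat.add_one_mul_choose_eq (r + j) r
  have hmono : r + 1 ≤ (r + j).choose r := by
    simpa [Nat.choose_succ_self_right] using Nat.choose_le_choose r (show r + 1 ≤ r + j by omega)
  rw [show r + 1 + j = r + j + 1 by omega]
  refine Nat.le_of_mul_le_mul_right (c := r + 1) ?_ (by omega)
  rw [← hpascal]
  exact Nat.mul_le_mul_left _ hmono

lemma sum_range_choose_succ_mul_pow {R : Type*} [CommRing R] (n : ℕ) (x : R) :
    ∑ j ∈ range n, (n.choose (j + 1) : R) * x ^ (j + 1) = (1 + x) ^ n - 1 := by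
  rw [add_comm 1 x, add_pow, sum_range_succ']
  simp only [one_pow, mul_one, pow_zero, Nat.choose_zero_right, Nat.cast_one]
  simp only [mul_comm, add_sub_cancel_right]

section BinomWeight

variable {α : ℕ} {p : ℝ}

lemma binomWeight_nonneg (hp : 0 ≤ p) (hp1 : p ≤ 1) (i : ℕ) : 0 ≤ binomWeight α p i := by
  have : 0 ≤ 1 - p := by linarith
  unfold binomWeight; positivity

lemma binomWeight_pos (hp : 0 < p) (hp1 : p < 1) {i : ℕ} (hi : i ≤ α) :
    0 < binomWeight α p i := by
  have : 0 < 1 - p := by linarith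
  have : 0 < α.choose i := Nat.choose_pos hi
  unfold binomWeight; positivity

lemma sum_binomWeight (α : ℕ) (p : ℝ) : ∑ i ∈ range (α + 1), binomWeight α p i = 1 := by
  have := (add_pow p (1 - p) α).symm
  rw [add_sub_cancel, one_pow] at this
  rw [← this]
  exact sum_congr rfl fun i _ ↦ by unfold binomWeight; ring

lemma binomCallExp_eq_sum_binomWeight (α : ℕ) (p z : ℝ) :
    binomCallExp α p z = ∑ i ∈ range (α + 1), binomWeight α p i * max ((i : ℝ) - z) 0 :=
  rfl

lemma factorial_div_mul_odds_pow_eq_binomWeight_div (hp : 0 < p) (hp1 : p < 1) {k j : ℕ}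
    (hk : 1 ≤ k) (hkj : k ≤ j) (hjα : j ≤ α) :
    ((α - k)! : ℝ) / (α - j)! * ((k - 1)! / j !) * (p / (1 - p)) ^ (j - k)
      = binomWeight α p j / (k * binomWeight α p k) := by
  have hq : 0 < 1 - p := by linarith
  have hpj : p ^ j = p ^ k * p ^ (j - k) := by rw [← pow_add, Nat.add_sub_cancel' hkj]
  have hqk : (1 - p) ^ (α - k) = (1 - p) ^ (α - j) * (1 - p) ^ (j - k) := by
    rw [← pow_add]; congr 1; omega
  have hkfac : (k ! : ℝ) = k * (k - 1)! := by
    rw [← Nat.cast_mul, Nat.mul_factorial_pred (by omega)]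
  unfold binomWeight
  rw [Nat.cast_choose ℝ hjα, Nat.cast_choose ℝ (hkj.trans hjα), hpj, hqk, hkfac, div_pow]
  field_simp

lemma h2_eq_mul_sum_binomWeight_div (hp : 0 < p) (hp1 : p < 1) (z : ℝ) {k : ℕ} (hk : 1 ≤ k) :
    h2 α p z k
      = binomCallExp α p z * (∑ j ∈ Icc k α, binomWeight α p j) / (k * binomWeight α p k) := by
  rw [h2, mul_sum, sum_div]
  refine sum_congr rfl fun j hj ↦ ?_
  obtain ⟨hkj, hjα⟩ := mem_Icc.mp hj
  rw [factorial_div_mul_odds_pow_eq_binomWeight_div hp hp1 hk hkj hjα]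
  ring

lemma binomWeight_add (hp1 : p < 1) {k j : ℕ} (h : k + j ≤ α) :
    binomWeight α p (k + j)
      = binomWeight α p k * (α - k).choose j * (p / (1 - p)) ^ j / (k + j).choose k := by
  have hq : 0 < 1 - p := by linarith
  have hchoose :
      ((α.choose (k + j) * (k + j).choose k : ℕ) : ℝ) = α.choose k * (α - k).choose j := by
    rw [Nat.choose_mul (n := α) (le_self_add : k ≤ k + j), Nat.add_sub_cancel_left]; push_cast; ring
  have hqk : (1 - p) ^ (α - k) = (1 - p) ^ (α - (k + j)) * (1 - p) ^ j := by
    rw [← pow_add]; congr 1; omega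
  have hpos : (0 : ℝ) < (k + j).choose k := by exact_mod_cast Nat.choose_pos le_self_add
  push_cast at hchoose
  unfold binomWeight
  rw [eq_div_iff hpos.ne', div_pow, hqk, pow_add]
  field_simp
  linear_combination p ^ k * p ^ j * hchoose

lemma binomWeight_add_mul_call_le (hp : 0 < p) (hp1 : p < 1) {k j : ℕ} {z : ℝ} (hk : 1 ≤ k)
    (hj : 1 ≤ j) (h : k + j ≤ α) (hz : 0 < z) (hzk : z ≤ k) :
    binomWeight α p (k + j) * max (((k + j : ℕ) : ℝ) - z) 0
      ≤ k * binomWeight α p k / ((1 - p) * z) * ((α - k).choose j * (p / (1 - p)) ^ j) := by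
  have hq : 0 < 1 - p := by linarith
  have hchoose : ((k + j : ℕ) : ℝ) ≤ (k + j).choose k := by exact_mod_cast add_le_choose_add hk hj
  have hpos : (0 : ℝ) < (k + j).choose k := by exact_mod_cast Nat.choose_pos le_self_add
  have hk_le : (k : ℝ) ≤ ((k + j : ℕ) : ℝ) := by exact_mod_cast le_self_add
  have hratio : (((k + j : ℕ) : ℝ) - z) / (k + j).choose k ≤ k / ((1 - p) * z) := by
    rw [div_le_div_iff₀ hpos (by positivity)]
    have hgap : (0 : ℝ) ≤ ((k + j : ℕ) : ℝ) - z := by linarith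
    calc (((k + j : ℕ) : ℝ) - z) * ((1 - p) * z) ≤ (((k + j : ℕ) : ℝ) - z) * k := by
          gcongr; nlinarith
      _ ≤ k * (k + j : ℕ) := by nlinarith
      _ ≤ k * (k + j).choose k := by gcongr
  have hX : 0 ≤ binomWeight α p k * (α - k).choose j * (p / (1 - p)) ^ j := by
    have := binomWeight_nonneg (α := α) hp.le hp1.le k
    positivity
  rw [binomWeight_add hp1 h, max_eq_left (by linarith)]
  calc _ = (((k + j : ℕ) : ℝ) - z) / (k + j).choose k
          * (binomWeight α p k * (α - k).choose j * (p / (1 - p)) ^ j) := by ring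
    _ ≤ k / ((1 - p) * z) * (binomWeight α p k * (α - k).choose j * (p / (1 - p)) ^ j) := by
        gcongr
    _ = _ := by ring

lemma sum_Icc_binomWeight_mul_call_le (hp : 0 < p) (hp1 : p < 1) {k : ℕ} {z : ℝ} (hk : 1 ≤ k)
    (hkα : k ≤ α) (hz : 0 < z) (hzk : z ≤ k) :
    ∑ i ∈ Icc k α, binomWeight α p i * max ((i : ℝ) - z) 0
      ≤ k * binomWeight α p k * (1 + (((1 - p) ^ (α - k))⁻¹ - 1) / ((1 - p) * z)) := by
  have hq : 0 < 1 - p := by linarith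
  have hwk := binomWeight_pos hp hp1 hkα
  have hhead : binomWeight α p k * max ((k : ℝ) - z) 0 ≤ k * binomWeight α p k := by
    rw [max_eq_left (by linarith), mul_comm]
    gcongr
    linarith
  have htail :
      ∑ j ∈ range (α - k), binomWeight α p (k + (j + 1)) * max (((k + (j + 1) : ℕ) : ℝ) - z) 0
      ≤ k * binomWeight α p k / ((1 - p) * z) * (((1 - p) ^ (α - k))⁻¹ - 1) := by
    have hodds : 1 + p / (1 - p) = (1 - p)⁻¹ := by field_simp; ring
    rw [← inv_pow, ← hodds, ← sum_range_choose_succ_mul_pow, mul_sum]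
    exact sum_le_sum fun j hj ↦ binomWeight_add_mul_call_le hp hp1 hk (by omega)
      (by have := mem_range.mp hj; omega) hz hzk
  rw [← Ico_add_one_right_eq_Icc, sum_Ico_eq_sum_range, show α + 1 - k = α - k + 1 by omega,
    sum_range_succ']
  calc _ ≤ k * binomWeight α p k / ((1 - p) * z) * (((1 - p) ^ (α - k))⁻¹ - 1)
          + k * binomWeight α p k := add_le_add htail (by simpa using hhead)
    _ = _ := by ring

lemma binomCallExp_mul_sum_Icc_binomWeight_le (hp : 0 < p) (hp1 : p < 1) {k : ℕ} {z : ℝ}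
    (hzk : z ≤ k) :
    binomCallExp α p z * ∑ i ∈ Icc k α, binomWeight α p i
      ≤ ∑ i ∈ Icc k α, binomWeight α p i * max ((i : ℝ) - z) 0 := by
  rw [binomCallExp_eq_sum_binomWeight]
  refine sum_mul_mul_sum_le_of_separated (c := k - z) (fun i hi ↦ ?_)
    (fun i _ ↦ binomWeight_nonneg hp.le hp1.le i) (sum_binomWeight α p) (fun i hi ↦ ?_)
    (fun i hi ↦ ?_)
  · simp only [mem_Icc, mem_range] at hi ⊢; omega
  · simp only [mem_sdiff, mem_Icc, mem_range] at hi
    have : (i : ℝ) ≤ k := by exact_mod_cast (show i ≤ k by omega)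
    exact max_le (by linarith) (by linarith)
  · have : (k : ℝ) ≤ i := by exact_mod_cast (mem_Icc.mp hi).1
    exact le_max_of_le_left (by linarith)

end BinomWeight

theorem h2_le_of_ge_general (α : ℕ) (p q : ℝ)
    (hq : q = 1 - p) (hp : 0 < p) (hp1 : p < 1) (z : ℝ) (hz : 1 < z)
    (k : ℕ) (hk : 1 ≤ k) (hkα : k ≤ α) (hzk : z ≤ (k : ℝ)) :
    h2 α p z k ≤ 1 + (q ^ ((k : ℤ) - (α : ℤ)) - 1) / (q * z) := by
  subst hq
  have hwk := binomWeight_pos hp hp1 hkα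
  have hcorr := binomCallExp_mul_sum_Icc_binomWeight_le (α := α) hp hp1 hzk
  have htail := sum_Icc_binomWeight_mul_call_le hp hp1 hk hkα (by linarith) hzk
  have hzpow : (1 - p) ^ ((k : ℤ) - α) = ((1 - p) ^ (α - k))⁻¹ := by
    rw [show (k : ℤ) - α = -((α - k : ℕ) : ℤ) by omega, zpow_neg, zpow_natCast]
  rw [h2_eq_mul_sum_binomWeight_div hp hp1 z hk, hzpow, div_le_iff₀ (by positivity)]
  linarith

/-- For `z > 1` and `1 ≤ k ≤ α` with `k ≥ z`,
`h₂(k) ≤ 1 + (q^{k-α} - 1)/(qz)`. -/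
theorem h2_le_of_ge (α : ℕ) (hα : 0 < α) (p q : ℝ)
    (hq : q = 1 - p) (hp : 0 < p) (hp1 : p < 1) (z : ℝ) (hz : 1 < z)
    (k : ℕ) (hk : 1 ≤ k) (hkα : k ≤ α) (hzk : z ≤ (k : ℝ)) :
    h2 α p z k ≤ 1 + (q ^ ((k : ℤ) - (α : ℤ)) - 1) / (q * z) :=
  h2_le_of_ge_general α p q hq hp hp1 z hz k hk hkα hzk
end
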